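/- Let R be a ring, M a right R-module, W = End_R(M), and α an anti-endomorphism of W. (1) If λ ∈ W satisfies α(α(w))·λ = λ·w for all w ∈ W and α(λ)·λ is a unit of W, then the assignment x ⊗_α y ↦ y ⊗_α (λ x) extends to a well-defined anti-automorphism θ of the double R-module K_α, λ is a right θ-asymmetry of b_α, and if moreover α(λ)·λ = 1 then θ is an involution of K_α. (2) Conversely, if b_α is right regular and θ is an anti-automorphism (resp. an involution) of K_α, then there exists λ ∈ W with α(α(w))·λ = λ·w for all w ∈ W, with α(λ)·λ a unit of W (resp. α(λ)·λ = 1), and with θ(x ⊗_α y) = y ⊗_α (λ x) for all x, y ∈ M. -/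

import Mathlib

open MulOpposite TensorProduct Function

universe u v w v'

section Core

/-- An anti-endomorphism of a ring: additive, unital, reverses multiplication. -/
def IsAntiEndo {W : Type*} [Ring W] (α : W → W) : Prop :=
  (∀ u v : W, α (u + v) = α u + α v) ∧ α 1 = 1 ∧ ∀ u v : W, α (u * v) = α v * α u

/-- An anti-automorphism of a ring: a bijective anti-endomorphism. -/
def IsAntiAuto {W : Type*} [Ring W] (α : W → W) : Prop :=
  IsAntiEndo α ∧ Function.Bijective α

/-- An inner automorphism of a ring: conjugation by a unit. -/
def IsInnerAut {W : Type*} [Ring W] (φ : W → W) : Prop :=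
  ∃ u : Wˣ, ∀ w : W, φ w = ↑u * w * ↑u⁻¹

variable (R : Type u) [Ring R]

/-- A double `R`-module structure on the additive group `K`: two commuting
right `R`-module structures `m0` and `m1`. -/
structure DoubleModule (K : Type v) [AddCommGroup K] where
  m0 : K → R → K
  m1 : K → R → K
  m0_add_left : ∀ (k k' : K) (r : R), m0 (k + k') r = m0 k r + m0 k' r
  m0_add_right : ∀ (k : K) (r r' : R), m0 k (r + r') = m0 k r + m0 k r'
  m0_mul : ∀ (k : K) (r r' : R), m0 k (r * r') = m0 (m0 k r) r'
  m0_one : ∀ k : K, m0 k 1 = k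
  m1_add_left : ∀ (k k' : K) (r : R), m1 (k + k') r = m1 k r + m1 k' r
  m1_add_right : ∀ (k : K) (r r' : R), m1 k (r + r') = m1 k r + m1 k r'
  m1_mul : ∀ (k : K) (r r' : R), m1 k (r * r') = m1 (m1 k r) r'
  m1_one : ∀ k : K, m1 k 1 = k
  comm : ∀ (k : K) (a b : R), m1 (m0 k a) b = m0 (m1 k b) a

variable {R}

/-- A homomorphism of double `R`-modules. -/
def IsDoubleHom {K : Type v} {K' : Type w} [AddCommGroup K] [AddCommGroup K']
    (DK : DoubleModule R K) (DK' : DoubleModule R K') (f : K → K') : Prop :=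
  (∀ k k' : K, f (k + k') = f k + f k') ∧
  (∀ (k : K) (r : R), f (DK.m0 k r) = DK'.m0 (f k) r) ∧
  (∀ (k : K) (r : R), f (DK.m1 k r) = DK'.m1 (f k) r)

/-- An isomorphism of double `R`-modules. -/
def IsDoubleIso {K : Type v} {K' : Type w} [AddCommGroup K] [AddCommGroup K']
    (DK : DoubleModule R K) (DK' : DoubleModule R K') (f : K → K') : Prop :=
  IsDoubleHom DK DK' f ∧ Function.Bijective f

/-- An anti-automorphism of a double `R`-module: an additive bijection exchanging
the two module structures. -/
def IsDoubleAntiAuto {K : Type v} [AddCommGroup K] (DK : DoubleModule R K) (θ : K → K) : Prop :=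
  Function.Bijective θ ∧ (∀ k k' : K, θ (k + k') = θ k + θ k') ∧
  (∀ (k : K) (r : R), θ (DK.m0 k r) = DK.m1 (θ k) r) ∧
  (∀ (k : K) (r : R), θ (DK.m1 k r) = DK.m0 (θ k) r)

variable (R)

/-- A general bilinear form on a right `R`-module `M` (encoded as a module over `Rᵐᵒᵖ`)
with values in a double `R`-module `(K, DK)`. -/
structure GBF (M : Type v) [AddCommGroup M] [Module Rᵐᵒᵖ M]
    (K : Type w) [AddCommGroup K] (DK : DoubleModule R K) where
  b : M → M → K
  add_left : ∀ x x' y : M, b (x + x') y = b x y + b x' y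
  add_right : ∀ x y y' : M, b x (y + y') = b x y + b x y'
  smul_left : ∀ (x y : M) (r : R), b (op r • x) y = DK.m0 (b x y) r
  smul_right : ∀ (x y : M) (r : R), b x (op r • y) = DK.m1 (b x y) r

variable {R}

namespace GBF

variable {M : Type v} [AddCommGroup M] [Module Rᵐᵒᵖ M]
  {K : Type w} [AddCommGroup K] {DK : DoubleModule R K}

/-- The right adjoint of `β` is injective. -/
def RightInjective (β : GBF R M K DK) : Prop :=
  ∀ x x' : M, (∀ y : M, β.b y x = β.b y x') → x = x'

/-- The right adjoint of `β` is bijective onto `Hom_R(M, K₀)`. -/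
def RightRegular (β : GBF R M K DK) : Prop :=
  β.RightInjective ∧
  ∀ f : M → K, (∀ y y' : M, f (y + y') = f y + f y') →
    (∀ (y : M) (r : R), f (op r • y) = DK.m0 (f y) r) →
    ∃ x : M, ∀ y : M, f y = β.b y x

/-- The left adjoint of `β` is injective. -/
def LeftInjective (β : GBF R M K DK) : Prop :=
  ∀ x x' : M, (∀ y : M, β.b x y = β.b x' y) → x = x'

/-- The left adjoint of `β` is bijective onto `Hom_R(M, K₁)`. -/
def LeftRegular (β : GBF R M K DK) : Prop :=
  β.LeftInjective ∧
  ∀ f : M → K, (∀ y y' : M, f (y + y') = f y + f y') →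
    (∀ (y : M) (r : R), f (op r • y) = DK.m1 (f y) r) →
    ∃ x : M, ∀ y : M, f y = β.b x y

/-- `α` is an adjoint anti-endomorphism for `β`: `β(w x, y) = β(x, α(w) y)`. -/
def IsAdjoint (β : GBF R M K DK) (α : Module.End Rᵐᵒᵖ M → Module.End Rᵐᵒᵖ M) : Prop :=
  ∀ (w : Module.End Rᵐᵒᵖ M) (x y : M), β.b (w x) y = β.b x (α w y)

/-- Similarity of general bilinear forms on the same module. -/
def Similar {K' : Type v'} [AddCommGroup K'] {DK' : DoubleModule R K'}
    (β : GBF R M K DK) (β' : GBF R M K' DK') : Prop :=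
  ∃ f : K → K', IsDoubleIso DK DK' f ∧ ∀ x y : M, β'.b x y = f (β.b x y)

end GBF

section Kalpha

variable {M : Type v} [AddCommGroup M] [Module Rᵐᵒᵖ M]

/-- The subgroup of `M ⊗_ℤ M` generated by the elements `(w x) ⊗ y - x ⊗ (α w y)`. -/
def kalphaRel (α : Module.End Rᵐᵒᵖ M → Module.End Rᵐᵒᵖ M) : Submodule ℤ (M ⊗[ℤ] M) :=
  Submodule.span ℤ
    {z | ∃ (w : Module.End Rᵐᵒᵖ M) (x y : M), z = (w x) ⊗ₜ[ℤ] y - x ⊗ₜ[ℤ] (α w y)}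

/-- `K_α`, the quotient of `M ⊗_ℤ M` by the relations `(w x) ⊗ y = x ⊗ (α w y)`. -/
abbrev Kalpha (α : Module.End Rᵐᵒᵖ M → Module.End Rᵐᵒᵖ M) : Type _ :=
  (M ⊗[ℤ] M) ⧸ kalphaRel α

/-- The map `x ⊗ y ↦ (x·r) ⊗ y` on `M ⊗_ℤ M`. -/
noncomputable def smulLeftMap (r : R) : (M ⊗[ℤ] M) →ₗ[ℤ] (M ⊗[ℤ] M) :=
  TensorProduct.map ((DistribMulAction.toAddMonoidHom M (op r : Rᵐᵒᵖ)).toIntLinearMap)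
    LinearMap.id

/-- The map `x ⊗ y ↦ x ⊗ (y·r)` on `M ⊗_ℤ M`. -/
noncomputable def smulRightMap (r : R) : (M ⊗[ℤ] M) →ₗ[ℤ] (M ⊗[ℤ] M) :=
  TensorProduct.map LinearMap.id
    ((DistribMulAction.toAddMonoidHom M (op r : Rᵐᵒᵖ)).toIntLinearMap)

theorem smulLeftMap_tmul (r : R) (x y : M) :
    smulLeftMap (M := M) r (x ⊗ₜ[ℤ] y) = (op r • x) ⊗ₜ[ℤ] y := by
  erw [TensorProduct.map_tmul]; rfl

theorem smulRightMap_tmul (r : R) (x y : M) :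
    smulRightMap (M := M) r (x ⊗ₜ[ℤ] y) = x ⊗ₜ[ℤ] (op r • y) := by
  erw [TensorProduct.map_tmul]; rfl

theorem kalphaRel_le_left (α : Module.End Rᵐᵒᵖ M → Module.End Rᵐᵒᵖ M) (r : R) :
    kalphaRel α ≤ (kalphaRel α).comap (smulLeftMap (M := M) r) := by
  rw [kalphaRel, Submodule.span_le]
  rintro _ ⟨w, x, y, rfl⟩
  rw [SetLike.mem_coe, Submodule.mem_comap, map_sub]
  have h1 : smulLeftMap (M := M) r ((w x) ⊗ₜ[ℤ] y) = (w (op r • x)) ⊗ₜ[ℤ] y := by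
    simp [smulLeftMap_tmul, map_smul]
  have h2 : smulLeftMap (M := M) r (x ⊗ₜ[ℤ] (α w y)) = (op r • x) ⊗ₜ[ℤ] (α w y) := by
    simp [smulLeftMap_tmul]
  rw [h1, h2]
  exact Submodule.subset_span ⟨w, op r • x, y, rfl⟩

theorem kalphaRel_le_right (α : Module.End Rᵐᵒᵖ M → Module.End Rᵐᵒᵖ M) (r : R) :
    kalphaRel α ≤ (kalphaRel α).comap (smulRightMap (M := M) r) := by
  rw [kalphaRel, Submodule.span_le]
  rintro _ ⟨w, x, y, rfl⟩
  rw [SetLike.mem_coe, Submodule.mem_comap, map_sub]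
  have h1 : smulRightMap (M := M) r ((w x) ⊗ₜ[ℤ] y) = (w x) ⊗ₜ[ℤ] (op r • y) := by
    simp [smulRightMap_tmul]
  have h2 : smulRightMap (M := M) r (x ⊗ₜ[ℤ] (α w y)) = x ⊗ₜ[ℤ] (α w (op r • y)) := by
    simp [smulRightMap_tmul, map_smul]
  rw [h1, h2]
  exact Submodule.subset_span ⟨w, x, op r • y, rfl⟩

/-- The `m0`-action on `K_α`. -/
noncomputable def kSmul0 (α : Module.End Rᵐᵒᵖ M → Module.End Rᵐᵒᵖ M) (r : R) :
    Kalpha α →ₗ[ℤ] Kalpha α :=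
  Submodule.mapQ _ _ (smulLeftMap r) (kalphaRel_le_left α r)

/-- The `m1`-action on `K_α`. -/
noncomputable def kSmul1 (α : Module.End Rᵐᵒᵖ M → Module.End Rᵐᵒᵖ M) (r : R) :
    Kalpha α →ₗ[ℤ] Kalpha α :=
  Submodule.mapQ _ _ (smulRightMap r) (kalphaRel_le_right α r)

theorem kSmul0_mk (α : Module.End Rᵐᵒᵖ M → Module.End Rᵐᵒᵖ M) (r : R) (t : M ⊗[ℤ] M) :
    kSmul0 α r (Submodule.Quotient.mk t) = Submodule.Quotient.mk (smulLeftMap r t) := rfl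

theorem kSmul1_mk (α : Module.End Rᵐᵒᵖ M → Module.End Rᵐᵒᵖ M) (r : R) (t : M ⊗[ℤ] M) :
    kSmul1 α r (Submodule.Quotient.mk t) = Submodule.Quotient.mk (smulRightMap r t) := rfl

/-- The double `R`-module structure on `K_α`. -/
noncomputable def KalphaDM (α : Module.End Rᵐᵒᵖ M → Module.End Rᵐᵒᵖ M) :
    DoubleModule R (Kalpha α) where
  m0 k r := kSmul0 α r k
  m1 k r := kSmul1 α r k
  m0_add_left k k' r := map_add _ k k'
  m0_add_right := by
    intro k r r'
    try dsimp only
    induction k using Submodule.Quotient.induction_on with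
    | _ t =>
      rw [kSmul0_mk, kSmul0_mk, kSmul0_mk, ← Submodule.Quotient.mk_add]
      congr 1
      induction t with
      | zero => simp
      | tmul x y => simp [smulLeftMap_tmul, op_add, add_smul, TensorProduct.add_tmul]
      | add a b ha hb => rw [map_add, map_add, map_add, ha, hb]; abel
  m0_mul := by
    intro k r r'
    try dsimp only
    induction k using Submodule.Quotient.induction_on with
    | _ t =>
      rw [kSmul0_mk, kSmul0_mk, kSmul0_mk]
      congr 1
      induction t with
      | zero => simp
      | tmul x y => simp [smulLeftMap_tmul, op_mul, mul_smul]
      | add a b ha hb => rw [map_add, map_add, map_add, ha, hb]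
  m0_one := by
    intro k
    try dsimp only
    induction k using Submodule.Quotient.induction_on with
    | _ t =>
      rw [kSmul0_mk]
      congr 1
      induction t with
      | zero => simp
      | tmul x y => simp [smulLeftMap_tmul]
      | add a b ha hb => rw [map_add, ha, hb]
  m1_add_left k k' r := map_add _ k k'
  m1_add_right := by
    intro k r r'
    try dsimp only
    induction k using Submodule.Quotient.induction_on with
    | _ t =>
      rw [kSmul1_mk, kSmul1_mk, kSmul1_mk, ← Submodule.Quotient.mk_add]
      congr 1
      induction t with
      | zero => simp
      | tmul x y => simp [smulRightMap_tmul, op_add, add_smul, TensorProduct.tmul_add]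
      | add a b ha hb => rw [map_add, map_add, map_add, ha, hb]; abel
  m1_mul := by
    intro k r r'
    try dsimp only
    induction k using Submodule.Quotient.induction_on with
    | _ t =>
      rw [kSmul1_mk, kSmul1_mk, kSmul1_mk]
      congr 1
      induction t with
      | zero => simp
      | tmul x y => simp [smulRightMap_tmul, op_mul, mul_smul]
      | add a b ha hb => rw [map_add, map_add, map_add, ha, hb]
  m1_one := by
    intro k
    try dsimp only
    induction k using Submodule.Quotient.induction_on with
    | _ t =>
      rw [kSmul1_mk]
      congr 1
      induction t with
      | zero => simp
      | tmul x y => simp [smulRightMap_tmul]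
      | add a b ha hb => rw [map_add, ha, hb]
  comm := by
    intro k a c
    try dsimp only
    induction k using Submodule.Quotient.induction_on with
    | _ t =>
      rw [kSmul0_mk, kSmul1_mk, kSmul1_mk, kSmul0_mk]
      congr 1
      induction t with
      | zero => simp
      | tmul x y => simp [smulLeftMap_tmul, smulRightMap_tmul]
      | add p q hp hq => rw [map_add, map_add, map_add, map_add, hp, hq]

/-- The universal general bilinear form `b_α : M × M → K_α`. -/
noncomputable def balpha (α : Module.End Rᵐᵒᵖ M → Module.End Rᵐᵒᵖ M) :
    GBF R M (Kalpha α) (KalphaDM α) where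
  b x y := Submodule.Quotient.mk (x ⊗ₜ[ℤ] y)
  add_left x x' y := by
    try dsimp only
    rw [TensorProduct.add_tmul, Submodule.Quotient.mk_add]
  add_right x y y' := by
    try dsimp only
    rw [TensorProduct.tmul_add, Submodule.Quotient.mk_add]
  smul_left x y r := by
    show _ = kSmul0 α r (Submodule.Quotient.mk (x ⊗ₜ[ℤ] y))
    rw [kSmul0_mk]
    congr 1
  smul_right x y r := by
    show _ = kSmul1 α r (Submodule.Quotient.mk (x ⊗ₜ[ℤ] y))
    rw [kSmul1_mk]
    congr 1

end Kalpha

end Core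


/-!
The map `x ⊗ y ↦ y ⊗ λx` respects the relations `(w x) ⊗ y = x ⊗ α(w) y` of `K_α` precisely
because `α(α(w))λ = λw`, and its square is `x ⊗ y ↦ x ⊗ α(λ)λ y`. Since `α(λ)λ` commutes with
`α(W)`, so does its inverse, and the square is bijective whenever `α(λ)λ` is a unit.

Conversely, right regularity represents `y ↦ θ(x ⊗ y)` as `y ↦ y ⊗ λx` for an `R`-linear `λ`;
the relations of `K_α` then force `α(α(w))λ = λw`, and the `λ'` obtained in the same way from
`θ⁻¹` gives the inverse `α(λ')λ'` of `α(λ)λ`.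
-/

theorem IsAntiEndo.commute_apply_mul_self {W : Type*} [Ring W] {α : W → W} (hα : IsAntiEndo α)
    {lam : W} (hlam : ∀ w, α (α w) * lam = lam * w) (w : W) : Commute (α w) (α lam * lam) :=
  calc α w * (α lam * lam) = α (lam * w) * lam := by rw [hα.2.2, mul_assoc]
    _ = α (α (α w) * lam) * lam := by rw [hlam]
    _ = α lam * (lam * α w) := by rw [hα.2.2, mul_assoc, hlam]
    _ = α lam * lam * α w := (mul_assoc _ _ _).symm

theorem IsDoubleAntiAuto.symm {R : Type u} [Ring R] {K : Type v} [AddCommGroup K]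
    {DK : DoubleModule R K} {θ : K → K} (hθ : IsDoubleAntiAuto DK θ) :
    IsDoubleAntiAuto DK (Equiv.ofBijective θ hθ.1).symm := by
  set e := Equiv.ofBijective θ hθ.1
  obtain ⟨-, hadd, hm0, hm1⟩ := hθ
  refine ⟨e.symm.bijective, fun k k' => e.injective ?_, fun k r => e.injective ?_,
    fun k r => e.injective ?_⟩
  · simp only [e, Equiv.ofBijective_apply, hadd, Equiv.ofBijective_apply_symm_apply]
  · simp only [e, Equiv.ofBijective_apply, hm1, Equiv.ofBijective_apply_symm_apply]
  · simp only [e, Equiv.ofBijective_apply, hm0, Equiv.ofBijective_apply_symm_apply]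

namespace GBF

variable {R : Type u} [Ring R] {M : Type v} [AddCommGroup M] [Module Rᵐᵒᵖ M]
  {K : Type w} [AddCommGroup K] {DK : DoubleModule R K}
  {α : Module.End Rᵐᵒᵖ M → Module.End Rᵐᵒᵖ M}

def IsRightAsymmetry (β : GBF R M K DK) (θ : K → K) (lam : Module.End Rᵐᵒᵖ M) : Prop :=
  ∀ x y : M, θ (β.b x y) = β.b y (lam x)

theorem RightInjective.eq_one {β : GBF R M K DK} (hinj : β.RightInjective)
    {e : Module.End Rᵐᵒᵖ M} (he : ∀ x y, β.b x (e y) = β.b x y) : e = 1 :=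
  LinearMap.ext fun y => hinj _ _ fun x => he x y

theorem exists_rightAsymmetry {β : GBF R M K DK} (hreg : β.RightRegular) {θ : K → K}
    (hθ : IsDoubleAntiAuto DK θ) : ∃ lam, β.IsRightAsymmetry θ lam := by
  obtain ⟨-, hadd, hm0, hm1⟩ := hθ
  have hex (x : M) : ∃ z, ∀ y, θ (β.b x y) = β.b y z :=
    hreg.2 _ (fun y y' => by rw [β.add_right, hadd]) (fun y r => by rw [β.smul_right, hm1])
  choose g hg using hex
  refine ⟨{ toFun := g, map_add' := fun x x' => ?_, map_smul' := fun c x => ?_ }, hg⟩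
  · refine hreg.1 _ _ fun y => ?_
    rw [β.add_right, ← hg, ← hg, ← hg, β.add_left, hadd]
  · refine hreg.1 _ _ fun y => ?_
    rw [RingHom.id_apply, ← op_unop c, β.smul_right, ← hg, ← hg, β.smul_left, hm0]

namespace IsRightAsymmetry

variable {β : GBF R M K DK} {θ : K → K} {lam : Module.End Rᵐᵒᵖ M}

theorem apply_apply (hadj : β.IsAdjoint α) (h : β.IsRightAsymmetry θ lam) (x y : M) :
    θ (θ (β.b x y)) = β.b x ((α lam * lam) y) := by
  rw [h, h, hadj, Module.End.mul_apply]

theorem alpha_alpha_mul (hinj : β.RightInjective) (hadj : β.IsAdjoint α)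
    (h : β.IsRightAsymmetry θ lam) (w : Module.End Rᵐᵒᵖ M) : α (α w) * lam = lam * w := by
  refine LinearMap.ext fun x => hinj _ _ fun y => ?_
  rw [Module.End.mul_apply, Module.End.mul_apply, ← hadj, ← h, ← hadj, h]

theorem smul_left (h : β.IsRightAsymmetry θ lam) (x y : M) (r : R) :
    θ (DK.m0 (β.b x y) r) = DK.m1 (θ (β.b x y)) r := by
  rw [← β.smul_left, h, h, map_smul, β.smul_right]

theorem smul_right (h : β.IsRightAsymmetry θ lam) (x y : M) (r : R) :
    θ (DK.m1 (β.b x y) r) = DK.m0 (θ (β.b x y)) r := by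
  rw [← β.smul_right, h, h, β.smul_left]

theorem isUnit_alpha_mul_self (hreg : β.RightRegular) (hadj : β.IsAdjoint α)
    (hθ : IsDoubleAntiAuto DK θ) (h : β.IsRightAsymmetry θ lam) : IsUnit (α lam * lam) := by
  obtain ⟨lam', h'⟩ := exists_rightAsymmetry hreg hθ.symm
  refine ⟨⟨α lam * lam, α lam' * lam', hreg.1.eq_one fun x y => ?_, hreg.1.eq_one fun x y => ?_⟩,
    rfl⟩
  · rw [Module.End.mul_apply, ← h.apply_apply hadj, ← h'.apply_apply hadj]
    simp only [Equiv.ofBijective_apply_symm_apply]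
  · rw [Module.End.mul_apply, ← h'.apply_apply hadj, ← h.apply_apply hadj]
    simp only [Equiv.ofBijective_symm_apply_apply]

theorem alpha_mul_self_eq_one (hinj : β.RightInjective) (hadj : β.IsAdjoint α)
    (h : β.IsRightAsymmetry θ lam) (hinv : ∀ k, θ (θ k) = k) : α lam * lam = 1 :=
  hinj.eq_one fun x y => by rw [← h.apply_apply hadj, hinv]

end IsRightAsymmetry

end GBF

namespace Kalpha

variable {R : Type u} [Ring R] {M : Type v} [AddCommGroup M] [Module Rᵐᵒᵖ M]
  {α : Module.End Rᵐᵒᵖ M → Module.End Rᵐᵒᵖ M}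

theorem balpha_isAdjoint : (balpha α).IsAdjoint α := fun w x y =>
  (Submodule.Quotient.eq _).2 (Submodule.subset_span ⟨w, x, y, rfl⟩)

theorem linearMap_ext {N : Type*} [AddCommGroup N] {f g : Kalpha α →ₗ[ℤ] N}
    (h : ∀ x y, f ((balpha α).b x y) = g ((balpha α).b x y)) : f = g :=
  Submodule.linearMap_qext _ (TensorProduct.ext' h)

/-- `x ⊗ y ↦ y ⊗ lam x` on `K_α`. -/
noncomputable def twist (lam : Module.End Rᵐᵒᵖ M)
    (hlam : ∀ w, α (α w) * lam = lam * w) : Kalpha α →ₗ[ℤ] Kalpha α :=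
  (kalphaRel α).liftQ ((kalphaRel α).mkQ ∘ₗ (TensorProduct.comm ℤ M M).toLinearMap ∘ₗ
      TensorProduct.map lam.toAddMonoidHom.toIntLinearMap LinearMap.id) <| by
    refine Submodule.span_le.2 ?_
    rintro _ ⟨w, x, y, rfl⟩
    simp only [SetLike.mem_coe, LinearMap.mem_ker, map_sub, sub_eq_zero]
    change (balpha α).b y (lam (w x)) = (balpha α).b (α w y) (lam x)
    rw [← Module.End.mul_apply, ← hlam, balpha_isAdjoint, Module.End.mul_apply]

theorem twist_isRightAsymmetry (lam : Module.End Rᵐᵒᵖ M)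
    (hlam : ∀ w, α (α w) * lam = lam * w) :
    (balpha α).IsRightAsymmetry (twist lam hlam) lam := fun _ _ => rfl

/-- `x ⊗ y ↦ x ⊗ v y` on `K_α`. -/
noncomputable def mapRight (v : Module.End Rᵐᵒᵖ M) (hv : ∀ w, Commute (α w) v) :
    Kalpha α →ₗ[ℤ] Kalpha α :=
  (kalphaRel α).liftQ ((kalphaRel α).mkQ ∘ₗ
      TensorProduct.map LinearMap.id v.toAddMonoidHom.toIntLinearMap) <| by
    refine Submodule.span_le.2 ?_
    rintro _ ⟨w, x, y, rfl⟩
    simp only [SetLike.mem_coe, LinearMap.mem_ker, map_sub, sub_eq_zero]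
    change (balpha α).b (w x) (v y) = (balpha α).b x (v (α w y))
    rw [balpha_isAdjoint, ← Module.End.mul_apply, (hv w).eq, Module.End.mul_apply]

theorem mapRight_bijective {v : Module.End Rᵐᵒᵖ M} (hv : ∀ w, Commute (α w) v)
    (hunit : IsUnit v) : Bijective (mapRight v hv) := by
  obtain ⟨U, rfl⟩ := hunit
  have inv_comp {v v' : Module.End Rᵐᵒᵖ M} (hv : ∀ w, Commute (α w) v)
      (hv' : ∀ w, Commute (α w) v') (h : v * v' = 1) :
      mapRight v hv ∘ₗ mapRight v' hv' = LinearMap.id :=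
    linearMap_ext fun x y => by
      change (balpha α).b x (v (v' y)) = (balpha α).b x y
      rw [← Module.End.mul_apply, h, Module.End.one_apply]
  have hv' w : Commute (α w) ↑U⁻¹ := (hv w).units_inv_right
  exact bijective_iff_has_inverse.2 ⟨mapRight _ hv',
    LinearMap.congr_fun (inv_comp hv' hv U.inv_mul),
    LinearMap.congr_fun (inv_comp hv hv' U.mul_inv)⟩

theorem twist_comp_twist (hα : IsAntiEndo α) (lam : Module.End Rᵐᵒᵖ M)
    (hlam : ∀ w, α (α w) * lam = lam * w) :
    twist lam hlam ∘ₗ twist lam hlam = mapRight _ (hα.commute_apply_mul_self hlam) :=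
  linearMap_ext fun x y => (twist_isRightAsymmetry lam hlam).apply_apply balpha_isAdjoint x y

theorem exists_isDoubleAntiAuto (hα : IsAntiEndo α) (lam : Module.End Rᵐᵒᵖ M)
    (hlam : ∀ w, α (α w) * lam = lam * w) (hunit : IsUnit (α lam * lam)) :
    ∃ θ : Kalpha α → Kalpha α, IsDoubleAntiAuto (KalphaDM α) θ ∧
      (balpha α).IsRightAsymmetry θ lam ∧ (α lam * lam = 1 → ∀ k, θ (θ k) = k) := by
  set θ := twist lam hlam
  have hasym := twist_isRightAsymmetry lam hlam
  have hbij : Bijective (θ ∘ θ) := by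
    rw [← LinearMap.coe_comp, twist_comp_twist hα]
    exact mapRight_bijective _ hunit
  refine ⟨θ, ⟨⟨hbij.injective.of_comp, hbij.surjective.of_comp⟩, map_add θ, fun k r => ?_,
    fun k r => ?_⟩, hasym, fun h1 k => ?_⟩
  · exact LinearMap.congr_fun (linearMap_ext (f := θ ∘ₗ kSmul0 α r) (g := kSmul1 α r ∘ₗ θ)
      fun x y => hasym.smul_left x y r) k
  · exact LinearMap.congr_fun (linearMap_ext (f := θ ∘ₗ kSmul1 α r) (g := kSmul0 α r ∘ₗ θ)
      fun x y => hasym.smul_right x y r) k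
  · refine LinearMap.congr_fun (linearMap_ext (f := θ ∘ₗ θ) (g := LinearMap.id) fun x y => ?_) k
    rw [LinearMap.comp_apply, hasym.apply_apply balpha_isAdjoint, h1, Module.End.one_apply]
    rfl

end Kalpha

/-- Elements `λ ∈ W` with `α(α(w))λ = λw` and `α(λ)λ` a unit induce
anti-automorphisms `x ⊗ y ↦ y ⊗ λx` of `K_α` (involutions when `α(λ)λ = 1`), with `λ`
a right `θ`-asymmetry of `b_α`; conversely, when `b_α` is right regular every
anti-automorphism (resp. involution) of `K_α` arises this way. -/
theorem stmt_4 {R : Type u} [Ring R] {M : Type v} [AddCommGroup M] [Module Rᵐᵒᵖ M]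
    (α : Module.End Rᵐᵒᵖ M → Module.End Rᵐᵒᵖ M) (hα : IsAntiEndo α) :
    (∀ lam : Module.End Rᵐᵒᵖ M,
      (∀ w : Module.End Rᵐᵒᵖ M, α (α w) * lam = lam * w) → IsUnit (α lam * lam) →
      ∃ θ : Kalpha (M := M) α → Kalpha (M := M) α,
        IsDoubleAntiAuto (KalphaDM α) θ ∧
        (∀ x y : M, θ ((balpha α).b x y) = (balpha α).b y (lam x)) ∧
        (α lam * lam = 1 → ∀ k, θ (θ k) = k)) ∧
    ((balpha (M := M) α).RightRegular →
      (∀ θ : Kalpha (M := M) α → Kalpha (M := M) α, IsDoubleAntiAuto (KalphaDM α) θ →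
        ∃ lam : Module.End Rᵐᵒᵖ M,
          (∀ w : Module.End Rᵐᵒᵖ M, α (α w) * lam = lam * w) ∧ IsUnit (α lam * lam) ∧
          ∀ x y : M, θ ((balpha α).b x y) = (balpha α).b y (lam x)) ∧
      (∀ θ : Kalpha (M := M) α → Kalpha (M := M) α, IsDoubleAntiAuto (KalphaDM α) θ →
        (∀ k, θ (θ k) = k) →
        ∃ lam : Module.End Rᵐᵒᵖ M,
          (∀ w : Module.End Rᵐᵒᵖ M, α (α w) * lam = lam * w) ∧ α lam * lam = 1 ∧
          ∀ x y : M, θ ((balpha α).b x y) = (balpha α).b y (lam x))) := by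
  have hadj := Kalpha.balpha_isAdjoint (α := α)
  refine ⟨Kalpha.exists_isDoubleAntiAuto hα, fun hreg => ⟨fun θ hθ => ?_, fun θ hθ hinv => ?_⟩⟩
  · obtain ⟨lam, hlam⟩ := GBF.exists_rightAsymmetry hreg hθ
    exact ⟨lam, hlam.alpha_alpha_mul hreg.1 hadj, hlam.isUnit_alpha_mul_self hreg hadj hθ, hlam⟩
  · obtain ⟨lam, hlam⟩ := GBF.exists_rightAsymmetry hreg hθ
    exact ⟨lam, hlam.alpha_alpha_mul hreg.1 hadj, hlam.alpha_mul_self_eq_one hreg.1 hadj hinv, hlam⟩
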